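/- Let k be a field of characteristic zero and let ⁅·,·⁆ be a Poisson bracket on P = MvPolynomial (Fin m) k. Then the modular derivation φ : P → P defined by φ(f) = Σ_{j=0}^{m-1} pderiv j ⁅f, X j⁆ is a Poisson derivation of P: it is k-linear, satisfies φ(a*b) = φ(a)*b + a*φ(b) for all a,b ∈ P, and satisfies φ(⁅a,b⁆) = ⁅φ(a), b⁆ + ⁅a, φ(b)⁆ for all a,b ∈ P. -/

import Mathlib

open MvPolynomial

lemma pderiv_comm' {k : Type*} [CommRing k] {m : ℕ} (i j : Fin m)
    (f : MvPolynomial (Fin m) k) :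
    pderiv i (pderiv j f) = pderiv j (pderiv i f) := by
  induction f using MvPolynomial.induction_on' with
  | monomial s a =>
    rcases eq_or_ne i j with h | h
    · rw [h]
    · simp only [pderiv_monomial]
      have h1 : ((s - Finsupp.single j 1 : Fin m →₀ ℕ) : Fin m →₀ ℕ) i = s i := by
        simp [Finsupp.single_eq_of_ne' (Ne.symm h)]
      have h2 : ((s - Finsupp.single i 1 : Fin m →₀ ℕ) : Fin m →₀ ℕ) j = s j := by
        simp [Finsupp.single_eq_of_ne' h]
      rw [h1, h2, tsub_tsub, tsub_tsub, add_comm (Finsupp.single j 1)]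
      ring_nf
  | add p q hp hq => simp [hp, hq]

section Aux
variable {k : Type*} [Field k] {m : ℕ}
    (B : MvPolynomial (Fin m) k → MvPolynomial (Fin m) k → MvPolynomial (Fin m) k)
    (hB_addr : ∀ a b c, B a (b + c) = B a b + B a c)
    (hB_smulr : ∀ (r : k) (a b), B a (r • b) = r • B a b)
    (hB_leib : ∀ a b c, B a (b * c) = B a b * c + b * B a c)

include hB_addr hB_smulr hB_leib in
lemma bracket_key (a g : MvPolynomial (Fin m) k) :
    B a g = ∑ i : Fin m, pderiv i g * B a (X i) := by
  have h1 : B a 1 = 0 := by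
    have := hB_leib a 1 1
    simp only [mul_one, one_mul] at this
    exact right_eq_add.mp this
  induction g using MvPolynomial.induction_on with
  | C r =>
    rw [show (C r : MvPolynomial (Fin m) k) = r • 1 by simp [smul_eq_C_mul],
      hB_smulr]
    simp [h1]
  | add p q hp hq =>
    rw [hB_addr, hp, hq, ← Finset.sum_add_distrib]
    simp [map_add, add_mul]
  | mul_X p s hp =>
    rw [hB_leib, hp]
    have : ∀ i : Fin m, pderiv i (p * X s) * B a (X i)
        = pderiv i p * X s * B a (X i) + p * (if s = i then B a (X i) else 0) := by
      intro i
      rw [pderiv_mul]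
      rcases eq_or_ne s i with h | h
      · subst h; simp [add_mul]
      · simp [pderiv_X_of_ne h, h]
    rw [Finset.sum_congr rfl (fun i _ => this i), Finset.sum_add_distrib,
      ← Finset.mul_sum, Finset.sum_ite_eq, if_pos (Finset.mem_univ s), Finset.sum_mul]
    congr 1
    exact Finset.sum_congr rfl fun i _ => by ring

set_option maxHeartbeats 1000000 in
include hB_addr hB_smulr hB_leib in
lemma T_eq (a b : MvPolynomial (Fin m) k) :
    ∑ j : Fin m, pderiv j (B a (B b (X j))) =
      (∑ j : Fin m, ∑ i : Fin m, pderiv i (B b (X j)) * pderiv j (B a (X i)))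
        + B a (∑ j : Fin m, pderiv j (B b (X j))) := by
  have e : ∀ j : Fin m, pderiv j (B a (B b (X j))) =
      ∑ i : Fin m, (pderiv j (pderiv i (B b (X j))) * B a (X i)
        + pderiv i (B b (X j)) * pderiv j (B a (X i))) := by
    intro j
    rw [bracket_key B hB_addr hB_smulr hB_leib a (B b (X j)), map_sum]
    exact Finset.sum_congr rfl fun i _ => pderiv_mul
  rw [Finset.sum_congr rfl fun j _ => e j]
  simp only [Finset.sum_add_distrib]
  rw [add_comm]
  congr 1
  rw [Finset.sum_comm, bracket_key B hB_addr hB_smulr hB_leib a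
    (∑ j : Fin m, pderiv j (B b (X j)))]
  refine Finset.sum_congr rfl fun i _ => ?_
  rw [map_sum, ← Finset.sum_mul]
  congr 1
  exact Finset.sum_congr rfl fun j _ => pderiv_comm' j i _
end Aux

theorem modularDerivation_isPoissonDerivation {k : Type*} [Field k] [CharZero k] {m : ℕ}
    (B : MvPolynomial (Fin m) k → MvPolynomial (Fin m) k → MvPolynomial (Fin m) k)
    (hB_addl : ∀ a b c, B (a + b) c = B a c + B b c)
    (hB_addr : ∀ a b c, B a (b + c) = B a b + B a c)
    (hB_smull : ∀ (r : k) (a b), B (r • a) b = r • B a b)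
    (hB_smulr : ∀ (r : k) (a b), B a (r • b) = r • B a b)
    (hB_anti : ∀ a b, B a b = -B b a)
    (hB_jac : ∀ a b c, B a (B b c) + B b (B c a) + B c (B a b) = 0)
    (hB_leib : ∀ a b c, B a (b * c) = B a b * c + b * B a c) :
    (∀ a b : MvPolynomial (Fin m) k,
      (∑ j : Fin m, pderiv j (B (a + b) (X j))) =
        (∑ j : Fin m, pderiv j (B a (X j))) + ∑ j : Fin m, pderiv j (B b (X j))) ∧
    (∀ (r : k) (a : MvPolynomial (Fin m) k),
      (∑ j : Fin m, pderiv j (B (r • a) (X j))) = r • ∑ j : Fin m, pderiv j (B a (X j))) ∧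
    (∀ a b : MvPolynomial (Fin m) k,
      (∑ j : Fin m, pderiv j (B (a * b) (X j))) =
        (∑ j : Fin m, pderiv j (B a (X j))) * b + a * ∑ j : Fin m, pderiv j (B b (X j))) ∧
    (∀ a b : MvPolynomial (Fin m) k,
      (∑ j : Fin m, pderiv j (B (B a b) (X j))) =
        B (∑ j : Fin m, pderiv j (B a (X j))) b +
          B a (∑ j : Fin m, pderiv j (B b (X j)))) := by
  have key := bracket_key B hB_addr hB_smulr hB_leib
  have neg_r : ∀ a x : MvPolynomial (Fin m) k, B a (-x) = -B a x := by
    intro a x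
    have := hB_smulr (-1) a x
    simpa using this
  refine ⟨?_, ?_, ?_, ?_⟩
  · intro a b
    simp [hB_addl, Finset.sum_add_distrib]
  · intro r a
    simp [hB_smull, Finset.smul_sum]
  · intro a b
    have hBmul : ∀ j : Fin m, B (a * b) (X j) = B a (X j) * b + a * B b (X j) := by
      intro j
      rw [hB_anti, hB_leib, hB_anti (X j) a, hB_anti (X j) b]
      ring
    have e : ∀ j : Fin m, pderiv j (B (a * b) (X j)) =
        pderiv j (B a (X j)) * b + B a (X j) * pderiv j b
          + (pderiv j a * B b (X j) + a * pderiv j (B b (X j))) := by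
      intro j
      rw [hBmul j, map_add, pderiv_mul, pderiv_mul]
    rw [Finset.sum_congr rfl fun j _ => e j]
    simp only [Finset.sum_add_distrib]
    have c1 : (∑ j : Fin m, B a (X j) * pderiv j b) = B a b := by
      rw [key a b]
      exact Finset.sum_congr rfl fun j _ => mul_comm _ _
    have c2 : (∑ j : Fin m, pderiv j a * B b (X j)) = B b a := (key b a).symm
    rw [c1, c2, hB_anti b a, ← Finset.sum_mul, ← Finset.mul_sum]
    ring
  · intro a b
    have jac : ∀ j : Fin m, B (B a b) (X j) = B a (B b (X j)) - B b (B a (X j)) := by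
      intro j
      have h1 := hB_jac a b (X j)
      rw [hB_anti (X j) a, neg_r, hB_anti (X j) (B a b)] at h1
      linear_combination -h1
    have e : ∀ j : Fin m, pderiv j (B (B a b) (X j)) =
        pderiv j (B a (B b (X j))) - pderiv j (B b (B a (X j))) := by
      intro j
      rw [jac j, map_sub]
    rw [Finset.sum_congr rfl fun j _ => e j, Finset.sum_sub_distrib,
      T_eq B hB_addr hB_smulr hB_leib a b, T_eq B hB_addr hB_smulr hB_leib b a]
    have hS : (∑ j : Fin m, ∑ i : Fin m, pderiv i (B b (X j)) * pderiv j (B a (X i)))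
        = ∑ j : Fin m, ∑ i : Fin m, pderiv i (B a (X j)) * pderiv j (B b (X i)) := by
      rw [Finset.sum_comm]
      exact Finset.sum_congr rfl fun j _ => Finset.sum_congr rfl fun i _ => mul_comm _ _
    rw [hS, hB_anti b (∑ j : Fin m, pderiv j (B a (X j)))]
    ring
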